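/- Let h : [n] → [n] be a Hessenberg function and w_h the corresponding codominant permutation. Then a transposition (i, j) with i < j satisfies (i, j) ≤ w_h in Bruhat order if and only if j ≤ h(i). In particular, |{(i,j) : i < j, (i,j) ≤ w_h}| = ℓ(w_h). -/

import Mathlib

/-- A Hessenberg function on `Fin n`: `i ≤ h i` and `h` is weakly increasing. -/
def IsHessenberg {n : ℕ} (h : Fin n → Fin n) : Prop :=
  (∀ i, i ≤ h i) ∧ Monotone h

/-- Lexicographic order on one-line notations of permutations. -/
def LexLE {n : ℕ} (u v : Equiv.Perm (Fin n)) : Prop :=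
  u = v ∨ ∃ i : Fin n, (∀ j, j < i → u j = v j) ∧ u i < v i

/-- `w` is bounded by the Hessenberg function `h`: `w i ≤ h i` for all `i`. -/
def Bounded {n : ℕ} (h : Fin n → Fin n) (w : Equiv.Perm (Fin n)) : Prop :=
  ∀ i, w i ≤ h i

/-- `w` is the lexicographically maximal permutation with `w i ≤ h i` for all `i`. -/
def IsMaxFor {n : ℕ} (h : Fin n → Fin n) (w : Equiv.Perm (Fin n)) : Prop :=
  Bounded h w ∧ ∀ w', Bounded h w' → LexLE w' w

/-- The Coxeter length of a permutation: its number of inversions. -/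
def lengthPerm {n : ℕ} (w : Equiv.Perm (Fin n)) : ℕ :=
  (Finset.univ.filter fun p : Fin n × Fin n => p.1 < p.2 ∧ w p.2 < w p.1).card

/-- `w` avoids the pattern 312. -/
def Avoids312 {n : ℕ} (w : Equiv.Perm (Fin n)) : Prop :=
  ¬ ∃ i j k : Fin n, i < j ∧ j < k ∧ w j < w k ∧ w k < w i

/-- The Bruhat order on `S_n`, generated by `w < w * t` for transpositions `t`
with `ℓ(w) < ℓ(w * t)`. -/
def BruhatLE {n : ℕ} (u w : Equiv.Perm (Fin n)) : Prop :=
  Relation.ReflTransGen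
    (fun x y => (∃ t : Equiv.Perm (Fin n), t.IsSwap ∧ y = x * t) ∧
      lengthPerm x < lengthPerm y) u w

/-!
An upward Bruhat step `x < x * (a b)` with `a < b` is exactly one with `x a < x b`. Such a step
only moves large values to the left, so "some position `c ≤ i` carries a value `≥ j`" is upward
closed; it holds for `(i j)`, and for `w_h` it forces `j ≤ h i`. Conversely every permutation
bounded by `h` lies below `w_h`: while some `i < j` has `u i < u j ≤ h i`, swapping them is a
bounded upward step, and a bounded permutation without such a pair is `w_h` by lexicographic
maximality. Finally, for `i < j` one has `w_h j < w_h i ↔ w_h j ≤ h i`, and for each `i`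
exactly `h i - i` positions `j > i` satisfy `w_h j ≤ h i`; this counts both sides of the
cardinality formula.
-/

open Equiv Finset

theorem card_filter_prod_congr {α β : Type*} [Fintype α] [Fintype β] {P Q : α × β → Prop}
    [DecidablePred P] [DecidablePred Q] (hPQ : ∀ a, #{b | P (a, b)} = #{b | Q (a, b)}) :
    #{p | P p} = #{p | Q p} := by
  simp only [card_filter, Fintype.sum_prod_type] at hPQ ⊢
  exact sum_congr rfl fun a _ => hPQ a

section

variable {n : ℕ}

def inversions (x : Perm (Fin n)) : Finset (Fin n × Fin n) :=
  univ.filter fun p => p.1 < p.2 ∧ x p.2 < x p.1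

theorem lengthPerm_eq_card_inversions (x : Perm (Fin n)) :
    lengthPerm x = (inversions x).card := rfl

theorem mem_inversions {x : Perm (Fin n)} {p : Fin n × Fin n} :
    p ∈ inversions x ↔ p.1 < p.2 ∧ x p.2 < x p.1 := by
  simp [inversions]

theorem lengthPerm_le_card (x : Perm (Fin n)) :
    lengthPerm x ≤ Fintype.card (Fin n × Fin n) :=
  card_le_univ _

def IsStraddling (a b : Fin n) (p : Fin n × Fin n) : Prop :=
  (p.1 = a ∨ p.1 = b) ∧ a < p.2 ∧ p.2 < b ∨ (p.2 = a ∨ p.2 = b) ∧ a < p.1 ∧ p.1 < b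

instance (a b : Fin n) : DecidablePred (IsStraddling a b) := fun _ => by
  unfold IsStraddling; infer_instance

/-- When `x a < x b`, the pairs straddling `a, b` that are inversions of `x` stay inversions of
`x * swap a b`, and all other inversions do after applying `swap a b`; the resulting injection
misses the inversion `(a, b)`. -/
def swapPair (a b : Fin n) (p : Fin n × Fin n) : Fin n × Fin n :=
  if IsStraddling a b p then p else Prod.map (swap a b) (swap a b) p

theorem isStraddling_map_swap_iff {a b : Fin n} (p : Fin n × Fin n) :
    IsStraddling a b (Prod.map (swap a b) (swap a b) p) ↔ IsStraddling a b p := by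
  obtain ⟨c, d⟩ := p
  simp only [IsStraddling, Prod.map, swap_apply_def]
  split_ifs <;> grind

theorem swapPair_involutive (a b : Fin n) :
    Function.Involutive (swapPair a b) := by
  intro p
  by_cases hp : IsStraddling a b p
  · simp [swapPair, hp]
  · have hp' := (isStraddling_map_swap_iff p).not.2 hp
    have hswap : swapPair a b p = Prod.map (swap a b) (swap a b) p := if_neg hp
    rw [hswap, swapPair, if_neg hp']
    exact (Function.Involutive.prodMap (swap_apply_self a b) (swap_apply_self a b)) p

theorem swap_lt_swap_of_not_isStraddling {a b c d : Fin n} (hab : a < b) (hcd : c < d)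
    (hs : ¬ IsStraddling a b (c, d)) (hne : (c, d) ≠ (a, b)) : swap a b c < swap a b d := by
  simp only [IsStraddling, ne_eq, Prod.mk.injEq] at hs hne
  simp only [swap_apply_def]
  split_ifs <;> grind

theorem swapPair_mem_inversions {a b : Fin n} (hab : a < b) {x : Perm (Fin n)}
    (hx : x a < x b) {p : Fin n × Fin n} (hp : p ∈ inversions x) :
    swapPair a b p ∈ inversions (x * swap a b) := by
  obtain ⟨c, d⟩ := p
  rw [mem_inversions] at hp
  obtain ⟨hcd, hxdc⟩ := hp
  rw [swapPair]
  split_ifs with hs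
  · rw [mem_inversions]
    refine ⟨hcd, ?_⟩
    simp only [IsStraddling] at hs
    simp only [Perm.mul_apply, swap_apply_def]
    split_ifs <;> grind
  · have hne : (c, d) ≠ (a, b) := by
      rintro ⟨⟩
      exact hx.not_gt hxdc
    rw [mem_inversions]
    exact ⟨swap_lt_swap_of_not_isStraddling hab hcd hs hne, by simpa using hxdc⟩

theorem lengthPerm_lt_mul_swap {a b : Fin n} (hab : a < b) {x : Perm (Fin n)}
    (hx : x a < x b) : lengthPerm x < lengthPerm (x * swap a b) := by
  have hinv := swapPair_involutive a b
  have hab_mem : (a, b) ∈ inversions (x * swap a b) := by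
    simpa [mem_inversions, hab] using hx
  have hab_not : (a, b) ∉ (inversions x).image (swapPair a b) := by
    rw [mem_image]
    rintro ⟨p, hp, hpab⟩
    have hba : swapPair a b (a, b) = (b, a) := by
      simp [swapPair, IsStraddling]
    rw [← hpab, hinv] at hba
    exact (mem_inversions.1 (hba ▸ hp)).1.not_gt hab
  rw [lengthPerm_eq_card_inversions, lengthPerm_eq_card_inversions,
    ← card_image_of_injective _ hinv.injective]
  exact card_lt_card ⟨image_subset_iff.2 fun p hp => swapPair_mem_inversions hab hx hp,
    fun hsub => hab_not (hsub hab_mem)⟩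

theorem apply_lt_apply_of_lengthPerm_lt_mul_swap {a b : Fin n} (hab : a < b)
    {x : Perm (Fin n)} (hlen : lengthPerm x < lengthPerm (x * swap a b)) : x a < x b := by
  refine (lt_or_gt_of_ne fun h => hab.ne (x.injective h)).resolve_right fun hba => ?_
  have := lengthPerm_lt_mul_swap hab (x := x * swap a b) (by simpa using hba)
  rw [mul_swap_mul_self] at this
  omega

theorem exists_lt_of_bruhat_step {x y : Perm (Fin n)}
    (hxy : (∃ t : Perm (Fin n), t.IsSwap ∧ y = x * t) ∧ lengthPerm x < lengthPerm y) :
    ∃ a b, a < b ∧ x a < x b ∧ y = x * swap a b := by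
  obtain ⟨⟨t, ⟨a, b, hne, rfl⟩, rfl⟩, hlen⟩ := hxy
  rcases hne.lt_or_gt with hab | hba
  · exact ⟨a, b, hab, apply_lt_apply_of_lengthPerm_lt_mul_swap hab hlen, rfl⟩
  · rw [swap_comm] at hlen ⊢
    exact ⟨b, a, hba, apply_lt_apply_of_lengthPerm_lt_mul_swap hba hlen, rfl⟩

theorem BruhatLE.exists_le_le_apply {u w : Perm (Fin n)} (huw : BruhatLE u w) {i j : Fin n}
    (hu : ∃ c ≤ i, j ≤ u c) : ∃ c ≤ i, j ≤ w c := by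
  induction huw with
  | refl => exact hu
  | tail _ hstep ih =>
    obtain ⟨a, b, hab, hxab, rfl⟩ := exists_lt_of_bruhat_step hstep
    obtain ⟨c, hci, hjc⟩ := ih
    by_cases hc : c = a ∨ c = b
    · refine ⟨a, ?_, ?_⟩
      · rcases hc with rfl | rfl
        exacts [hci, hab.le.trans hci]
      · rw [Perm.mul_apply, swap_apply_left]
        rcases hc with rfl | rfl
        exacts [hjc.trans hxab.le, hjc]
    · rw [not_or] at hc
      exact ⟨c, hci, by rwa [Perm.mul_apply, swap_apply_of_ne_of_ne hc.1 hc.2]⟩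

section Hessenberg

variable {h : Fin n → Fin n}

theorem Bounded.mul_swap {u : Perm (Fin n)} (hu : Bounded h u) {i j : Fin n}
    (hi : u j ≤ h i) (hj : u i ≤ h j) : Bounded h (u * swap i j) := by
  intro c
  simp only [Perm.mul_apply, swap_apply_def]
  split_ifs with hci hcj
  · exact hci ▸ hi
  · exact hcj ▸ hj
  · exact hu c

theorem Bounded.le_of_bruhatLE_swap (hmono : Monotone h) {w : Perm (Fin n)} (hw : Bounded h w)
    {i j : Fin n} (hle : BruhatLE (swap i j) w) : j ≤ h i := by
  obtain ⟨c, hci, hjc⟩ := hle.exists_le_le_apply ⟨i, le_rfl, (swap_apply_left i j).ge⟩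
  exact hjc.trans ((hw c).trans (hmono hci))

theorem lexLE_iff_toLex_le {u v : Perm (Fin n)} : LexLE u v ↔ toLex ⇑u ≤ toLex ⇑v := by
  rw [le_iff_eq_or_lt, toLex_inj, DFunLike.coe_fn_eq]
  rfl

theorem IsMaxFor.apply_lt_apply (hmono : Monotone h) {w : Perm (Fin n)} (hw : IsMaxFor h w)
    {i j : Fin n} (hij : i < j) (hle : w j ≤ h i) : w j < w i := by
  refine lt_of_not_ge fun hwij => ?_
  have hlt : w i < w j := hwij.lt_of_ne (w.injective.ne hij.ne)
  have hbd := hw.1.mul_swap hle (hlt.le.trans (hle.trans (hmono hij.le)))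
  refine (lexLE_iff_toLex_le.1 (hw.2 _ hbd)).not_gt ⟨i, fun k hk => ?_, ?_⟩
  · simp [swap_apply_of_ne_of_ne hk.ne (hk.trans hij).ne]
  · simpa using hlt

theorem lexLE_of_forall_apply_lt {u : Perm (Fin n)}
    (hu : ∀ i j, i < j → u j ≤ h i → u j < u i) {v : Perm (Fin n)} (hv : Bounded h v) :
    LexLE v u := by
  refine lexLE_iff_toLex_le.2 (not_lt.1 fun ⟨i, hpre, hlt⟩ => ?_)
  obtain ⟨k, hk⟩ : ∃ k, u k = v i := ⟨_, u.apply_symm_apply _⟩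
  have hik : i < k := by
    refine lt_of_not_ge fun hki => ?_
    rcases hki.lt_or_eq with hki | rfl
    · exact hki.ne (v.injective ((hpre k hki).symm.trans hk))
    · exact hlt.ne hk
  exact (hu i k hik (hk ▸ hv i)).not_gt (hk ▸ hlt)

theorem IsMaxFor.eq_of_forall_apply_lt {w : Perm (Fin n)} (hw : IsMaxFor h w)
    {u : Perm (Fin n)} (hu : Bounded h u) (hgreedy : ∀ i j, i < j → u j ≤ h i → u j < u i) :
    u = w :=
  DFunLike.coe_injective <| toLex_inj.1 <| le_antisymm (lexLE_iff_toLex_le.1 (hw.2 u hu))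
    (lexLE_iff_toLex_le.1 (lexLE_of_forall_apply_lt hgreedy hw.1))

theorem IsMaxFor.bruhatLE_of_bounded (hmono : Monotone h) {w : Perm (Fin n)}
    (hw : IsMaxFor h w) (u : Perm (Fin n)) (hu : Bounded h u) : BruhatLE u w := by
  by_cases hgreedy : ∀ i j, i < j → u j ≤ h i → u j < u i
  · rw [hw.eq_of_forall_apply_lt hu hgreedy]
    exact .refl
  · push Not at hgreedy
    obtain ⟨i, j, hij, hle, hge⟩ := hgreedy
    have hlt : u i < u j := hge.lt_of_ne (u.injective.ne hij.ne)
    exact .head ⟨⟨swap i j, ⟨i, j, hij.ne, rfl⟩, rfl⟩, lengthPerm_lt_mul_swap hij hlt⟩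
      (hw.bruhatLE_of_bounded hmono _ (hu.mul_swap hle (hlt.le.trans (hle.trans (hmono hij.le)))))
termination_by Fintype.card (Fin n × Fin n) - lengthPerm u
decreasing_by
  have := lengthPerm_lt_mul_swap hij hlt
  have := lengthPerm_le_card (u * swap i j)
  omega

theorem card_filter_lt_apply_le (hmono : Monotone h) {u : Perm (Fin n)} (hu : Bounded h u)
    (i : Fin n) : #{j | i < j ∧ u j ≤ h i} = (h i : ℕ) - i := by
  have hsdiff : univ.filter (fun j => i < j ∧ u j ≤ h i)
      = univ.filter (fun j => u j ≤ h i) \ Iic i := by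
    ext j; simp [and_comm]
  have hsub : Iic i ⊆ univ.filter (fun j => u j ≤ h i) := fun c hc =>
    mem_filter.2 ⟨mem_univ c, (hu c).trans (hmono (mem_Iic.1 hc))⟩
  have hcard : #{j | u j ≤ h i} = #(Iic (h i)) := card_equiv u (by simp)
  rw [hsdiff, card_sdiff_of_subset hsub, hcard, Fin.card_Iic, Fin.card_Iic]
  omega

theorem IsMaxFor.lengthPerm_eq (hmono : Monotone h) {w : Perm (Fin n)} (hw : IsMaxFor h w) :
    lengthPerm w = #{p : Fin n × Fin n | p.1 < p.2 ∧ w p.2 ≤ h p.1} :=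
  congrArg card <| filter_congr fun p _ =>
    and_congr_right fun hp => ⟨fun hlt => hlt.le.trans (hw.1 p.1), hw.apply_lt_apply hmono hp⟩

end Hessenberg

end

/-- for a Hessenberg function `h` with codominant permutation `w_h`,
a transposition `(i,j)` (`i < j`) satisfies `(i,j) ≤ w_h` in Bruhat order iff
`j ≤ h i`; in particular the number of such transpositions is `ℓ(w_h)`. -/
theorem stmt8 (n : ℕ) (h : Fin n → Fin n) (hh : IsHessenberg h)
    (w : Equiv.Perm (Fin n)) (hw : IsMaxFor h w) :
    (∀ i j : Fin n, i < j → (BruhatLE (Equiv.swap i j) w ↔ j ≤ h i)) ∧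
    {p : Fin n × Fin n | p.1 < p.2 ∧ BruhatLE (Equiv.swap p.1 p.2) w}.ncard
      = lengthPerm w := by
  have hone : Bounded h 1 := hh.1
  have hbruhat : ∀ i j : Fin n, i < j → (BruhatLE (swap i j) w ↔ j ≤ h i) := fun i j hij =>
    ⟨hw.1.le_of_bruhatLE_swap hh.2, fun hji => hw.bruhatLE_of_bounded hh.2 _ <| by
      simpa using hone.mul_swap hji (hij.le.trans (hh.1 j))⟩
  refine ⟨hbruhat, ?_⟩
  have hset : {p : Fin n × Fin n | p.1 < p.2 ∧ BruhatLE (swap p.1 p.2) w}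
      = ↑(univ.filter fun p : Fin n × Fin n => p.1 < p.2 ∧ p.2 ≤ h p.1) := by
    ext p
    simpa using and_congr_right (hbruhat p.1 p.2)
  rw [hset, Set.ncard_coe_finset, hw.lengthPerm_eq hh.2]
  refine card_filter_prod_congr fun i => ?_
  exact (card_filter_lt_apply_le hh.2 hone i).trans (card_filter_lt_apply_le hh.2 hw.1 i).symm
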